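/- Consider n jobs with unit weights (w_j = 1) and processing times p_1,…,p_n > 0, all to be executed on a single shared processor. (i) If p_1 ≤ p_2 ≤ ⋯ ≤ p_n, then executing the jobs in the order 1,…,n is feasible and the total overlap equals p_n/2 + p_{n−1}/4 + ⋯ + p_1/2^n = Σ_{i=1}^{n} p_i/2^{n+1−i}. (ii) If an ordering of all n jobs on the single shared processor is feasible and maximizes the total overlap among all feasible orderings, then along that ordering the processing times are non-decreasing. -/

import Mathlib

/-- Start times on a shared processor for a sequence of processing times `q`:
`Tseq q 0 = 0` and `Tseq q (i+1) = (Tseq q i + q_i)/2`; job `i` (0-indexed)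
occupies the shared processor during `(Tseq q i, Tseq q (i+1))`. -/
noncomputable def Tseq (q : List ℝ) : ℕ → ℝ
  | 0 => 0
  | i + 1 => (Tseq q i + q.getD i 0) / 2

/-- A sequence of processing times is feasible on a shared processor if every
job is long enough: `q_i > T_i`. -/
def ListFeasible (q : List ℝ) : Prop :=
  ∀ i < q.length, Tseq q i < q.getD i 0

/-- Total weighted overlap of one shared processor executing jobs with
processing times `q` and weights `v` (in this order): the overlap of the `i`-th
job is `(q_i - T_i)/2`. -/
noncomputable def listOverlap (q v : List ℝ) : ℝ :=
  ∑ i ∈ Finset.range q.length, v.getD i 0 * (q.getD i 0 - Tseq q i) / 2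

/-- A synchronized schedule: each of the `m` shared processors gets a finite
sequence of distinct jobs, and each job appears on at most one shared processor
(jobs appearing nowhere execute on their private processors only). -/
structure SyncSchedule (J : Type) (m : ℕ) where
  seq : Fin m → List J
  nodup : ∀ i, (seq i).Nodup
  disj : ∀ i i' j, j ∈ seq i → j ∈ seq i' → i = i'

namespace SyncSchedule

variable {J : Type} {m : ℕ}

/-- Feasibility of a synchronized schedule for processing times `p`. -/
def Feasible (p : J → ℝ) (S : SyncSchedule J m) : Prop :=
  ∀ i, ListFeasible ((S.seq i).map p)

/-- Total weighted overlap of a synchronized schedule. -/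
noncomputable def Omega (p w : J → ℝ) (S : SyncSchedule J m) : ℝ :=
  ∑ i, listOverlap ((S.seq i).map p) ((S.seq i).map w)

/-- A feasible synchronized schedule is optimal if it maximizes the total
weighted overlap among all feasible synchronized schedules. -/
def Optimal (p w : J → ℝ) (S : SyncSchedule J m) : Prop :=
  S.Feasible p ∧ ∀ S' : SyncSchedule J m, S'.Feasible p → S'.Omega p w ≤ S.Omega p w

end SyncSchedule

/-- Total (unit-weight) overlap of a single shared processor executing jobs
with processing times `q` in this order. -/
noncomputable def unitOverlap (q : List ℝ) : ℝ :=
  ∑ i ∈ Finset.range q.length, (q.getD i 0 - Tseq q i) / 2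

/-!
The overlaps telescope, `(q_i - T_i)/2 = T_{i+1} - T_i`, so the total overlap is
`T_n = Σ_i q_i / 2^(n-i) = D(q) / 2^n` with `D(q) = Σ_i 2^i q_i`. A sum with increasing weights
`2^i` is maximised by the sorted order, and swapping an adjacent inversion strictly increases it,
so an unsorted order is strictly beaten by the sorted one. The sorted order is a legitimate
competitor because it is feasible: inductively `T_{i+1} = (T_i + q_i)/2 < q_i ≤ q_{i+1}`.
The swapped order need not be feasible; it only serves to compare with the sorted one.
-/

noncomputable def doublingSum : List ℝ → ℝ
  | [] => 0
  | a :: t => a + 2 * doublingSum t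

lemma doublingSum_eq_sum (q : List ℝ) :
    doublingSum q = ∑ i ∈ Finset.range q.length, q.getD i 0 * 2 ^ i := by
  induction q with
  | nil => simp [doublingSum]
  | cons a t ih =>
    rw [doublingSum, List.length_cons, Finset.sum_range_succ', ih, Finset.mul_sum]
    simp only [List.getD_cons_succ, List.getD_cons_zero, pow_succ]
    ring_nf

lemma doublingSum_append (u w : List ℝ) :
    doublingSum (u ++ w) = doublingSum u + 2 ^ u.length * doublingSum w := by
  induction u with
  | nil => simp [doublingSum]
  | cons a t ih =>
    simp only [List.cons_append, doublingSum, List.length_cons, ih, pow_succ]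
    ring

lemma doublingSum_append_cons_le {b : ℝ} {u : List ℝ} (hb : ∀ x ∈ u, b ≤ x) (v : List ℝ) :
    doublingSum (u ++ b :: v) ≤ b + 2 * doublingSum (u ++ v) := by
  induction u with
  | nil => simp [doublingSum]
  | cons a t ih =>
    have hba : b ≤ a := hb a List.mem_cons_self
    have ht := ih fun x hx => hb x (List.mem_cons_of_mem a hx)
    simp only [List.cons_append, doublingSum]
    nlinarith

lemma doublingSum_le_of_perm_of_sorted {l s : List ℝ} (hperm : l.Perm s)
    (hs : s.Pairwise (· ≤ ·)) : doublingSum l ≤ doublingSum s := by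
  induction s generalizing l with
  | nil => rw [hperm.eq_nil]
  | cons b s ih =>
    rw [List.pairwise_cons] at hs
    obtain ⟨u, v, rfl⟩ := List.append_of_mem (hperm.mem_iff.mpr List.mem_cons_self)
    have huv : (u ++ v).Perm s := (List.perm_middle.symm.trans hperm).cons_inv
    have hb : ∀ x ∈ u, b ≤ x := by
      intro x hx
      rcases List.mem_cons.mp (hperm.subset (List.mem_append_left _ hx)) with rfl | hxs
      · exact le_rfl
      · exact hs.1 x hxs
    calc doublingSum (u ++ b :: v) ≤ b + 2 * doublingSum (u ++ v) :=
          doublingSum_append_cons_le hb v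
      _ ≤ b + 2 * doublingSum s := by linarith [ih huv hs.2]
      _ = doublingSum (b :: s) := rfl

lemma doublingSum_lt_swap (u v : List ℝ) {a b : ℝ} (hba : b < a) :
    doublingSum (u ++ a :: b :: v) < doublingSum (u ++ b :: a :: v) := by
  simp only [doublingSum_append, doublingSum]
  have hu : (0 : ℝ) < 2 ^ u.length := by positivity
  nlinarith

lemma doublingSum_lt_of_perm_of_not_sorted {l s : List ℝ} (hperm : l.Perm s)
    (hs : s.Pairwise (· ≤ ·)) (hl : ¬l.Pairwise (· ≤ ·)) : doublingSum l < doublingSum s := by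
  rw [← List.isChain_iff_pairwise, List.isChain_iff_forall_rel_of_append_cons_cons] at hl
  push Not at hl
  obtain ⟨a, b, u, v, rfl, hba⟩ := hl
  have hswap : (u ++ b :: a :: v).Perm s :=
    ((List.Perm.swap a b v).append_left u).trans hperm
  exact (doublingSum_lt_swap u v hba).trans_le
    (doublingSum_le_of_perm_of_sorted hswap hs)

lemma Tseq_cons_succ (a : ℝ) (t : List ℝ) (i : ℕ) :
    Tseq (a :: t) (i + 1) = Tseq t i + a / 2 ^ (i + 1) := by
  induction i with
  | zero => simp [Tseq]
  | succ i ih =>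
    rw [Tseq, ih, List.getD_cons_succ, Tseq, pow_succ]
    ring

lemma Tseq_length (q : List ℝ) : Tseq q q.length = doublingSum q / 2 ^ q.length := by
  induction q with
  | nil => simp [Tseq, doublingSum]
  | cons a t ih =>
    rw [List.length_cons, Tseq_cons_succ, ih, doublingSum, pow_succ]
    field_simp
    ring

lemma unitOverlap_eq_Tseq_length (q : List ℝ) : unitOverlap q = Tseq q q.length := by
  have htelescope : ∀ i, (q.getD i 0 - Tseq q i) / 2 = Tseq q (i + 1) - Tseq q i := by
    intro i
    rw [Tseq]
    ring
  rw [unitOverlap, Finset.sum_congr rfl fun i _ => htelescope i, Finset.sum_range_sub, Tseq,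
    sub_zero]

lemma unitOverlap_eq_doublingSum_div (q : List ℝ) :
    unitOverlap q = doublingSum q / 2 ^ q.length := by
  rw [unitOverlap_eq_Tseq_length, Tseq_length]

lemma unitOverlap_eq_sum (q : List ℝ) :
    unitOverlap q = ∑ i ∈ Finset.range q.length, q.getD i 0 / 2 ^ (q.length - i) := by
  rw [unitOverlap_eq_doublingSum_div, doublingSum_eq_sum, Finset.sum_div]
  refine Finset.sum_congr rfl fun i hi => ?_
  have hpow : (2 : ℝ) ^ (q.length - i) * 2 ^ i = 2 ^ q.length :=
    pow_sub_mul_pow 2 (Finset.mem_range.mp hi).le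
  rw [div_eq_div_iff (by positivity) (by positivity), ← hpow]
  ring

lemma unitOverlap_lt_of_perm_of_not_sorted {l s : List ℝ} (hperm : l.Perm s)
    (hs : s.Pairwise (· ≤ ·)) (hl : ¬l.Pairwise (· ≤ ·)) : unitOverlap l < unitOverlap s := by
  rw [unitOverlap_eq_doublingSum_div, unitOverlap_eq_doublingSum_div, hperm.length_eq]
  exact div_lt_div_of_pos_right (doublingSum_lt_of_perm_of_not_sorted hperm hs hl) (by positivity)

lemma listFeasible_of_sorted {q : List ℝ} (hpos : ∀ a ∈ q, 0 < a)
    (hs : q.Pairwise (· ≤ ·)) : ListFeasible q := by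
  intro i hi
  induction i with
  | zero =>
    rw [Tseq, List.getD_eq_getElem q 0 hi]
    exact hpos _ (q.getElem_mem hi)
  | succ i ih =>
    have hi' : i < q.length := Nat.lt_of_succ_lt hi
    have hmono : q.getD i 0 ≤ q.getD (i + 1) 0 := by
      rw [List.getD_eq_getElem q 0 hi', List.getD_eq_getElem q 0 hi]
      exact hs.rel_get_of_lt (by simp)
    rw [Tseq]
    linarith [ih hi']

/-- Unit weights, one shared processor.
(i) If the processing times `q` are non-decreasing, then executing the jobs in
this order is feasible and the total overlap equals
`Σ_{i=1}^{n} p_i / 2^(n+1-i)` (0-indexed: `Σ_{i<n} q_i / 2^(n-i)`).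
(ii) Any feasible ordering of all the jobs maximizing the total overlap among
all feasible orderings has non-decreasing processing times. -/
theorem unit_weight_single_processor
    (q : List ℝ) (hpos : ∀ a ∈ q, (0:ℝ) < a) :
    (q.Pairwise (· ≤ ·) →
      ListFeasible q ∧
      unitOverlap q = ∑ i ∈ Finset.range q.length, q.getD i 0 / 2 ^ (q.length - i)) ∧
    (∀ q' : List ℝ, q'.Perm q → ListFeasible q' →
      (∀ q'' : List ℝ, q''.Perm q → ListFeasible q'' →
        unitOverlap q'' ≤ unitOverlap q') →
      q'.Pairwise (· ≤ ·)) := by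
  refine ⟨fun hsorted => ⟨listFeasible_of_sorted hpos hsorted, unitOverlap_eq_sum q⟩, ?_⟩
  intro q' hperm _ hopt
  by_contra hunsorted
  set s := q.insertionSort (· ≤ ·)
  have hs_perm : s.Perm q := List.perm_insertionSort _ q
  have hs_sorted : s.Pairwise (· ≤ ·) := List.pairwise_insertionSort _ q
  have hs_feasible : ListFeasible s :=
    listFeasible_of_sorted (fun a ha => hpos a (hs_perm.subset ha)) hs_sorted
  have hle : unitOverlap s ≤ unitOverlap q' := hopt s hs_perm hs_feasible
  have hlt : unitOverlap q' < unitOverlap s :=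
    unitOverlap_lt_of_perm_of_not_sorted (hperm.trans hs_perm.symm) hs_sorted hunsorted
  exact hle.not_gt hlt
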